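/- arXiv:2407.02938 — 4 statements merged into one kernel-verified Lean document; each statement's English description precedes it below -/
import Mathlib

section
/- Let n = p_1 p_2 ⋯ p_k be a product of k ≥ 2 distinct primes. Then the essential ideal graph E_{Z_n} of the ring Z_n = Z/nZ is isomorphic, as a simple graph, to the annihilating ideal graph AIG(Z_n). -/
/-- An ideal `I` of a commutative ring `R` is essential if it is nonzero and has
nonzero intersection with every nonzero ideal of `R`. -/
def IsEssentialIdeal {R : Type*} [CommRing R] (I : Ideal R) : Prop :=
  I ≠ ⊥ ∧ ∀ J : Ideal R, J ≠ ⊥ → I ⊓ J ≠ ⊥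

/-- The essential ideal graph of a commutative ring `R`: vertices are the nonzero
proper ideals of `R`, and distinct vertices `I`, `J` are adjacent iff `I + J` is
an essential ideal of `R`. -/
def essentialIdealGraph (R : Type*) [CommRing R] :
    SimpleGraph {I : Ideal R // I ≠ ⊥ ∧ I ≠ ⊤} where
  Adj I J := I ≠ J ∧ IsEssentialIdeal (I.1 ⊔ J.1)
  symm := ⟨by
    rintro I J ⟨hne, h⟩
    exact ⟨hne.symm, by rwa [sup_comm]⟩⟩
  loopless := ⟨fun I h => h.1 rfl⟩

/-- The annihilating ideal graph of a commutative ring `R`: vertices are the nonzero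
annihilating ideals of `R`, with distinct vertices `I`, `J` adjacent iff `I * J = 0`. -/
def annihilatingIdealGraph (R : Type*) [CommRing R] :
    SimpleGraph {I : Ideal R // I ≠ ⊥ ∧ ∃ J : Ideal R, J ≠ ⊥ ∧ I * J = ⊥} where
  Adj I J := I ≠ J ∧ I.1 * J.1 = ⊥
  symm := ⟨by
    rintro I J ⟨hne, h⟩
    exact ⟨hne.symm, by rwa [mul_comm]⟩⟩
  loopless := ⟨fun I h => h.1 rfl⟩

/-- A set `W` of vertices of a graph `G` is a resolving set if any two distinct
vertices are distinguished by their distance to some element of `W`. -/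
def IsResolvingSet {V : Type*} (G : SimpleGraph V) (W : Set V) : Prop :=
  ∀ u v : V, u ≠ v → ∃ w ∈ W, G.dist u w ≠ G.dist v w

/-- The metric dimension of a graph: the least cardinality of a (finite) resolving set. -/
noncomputable def metricDim {V : Type*} (G : SimpleGraph V) : ℕ :=
  sInf {k : ℕ | ∃ W : Set V, W.Finite ∧ IsResolvingSet G W ∧ W.ncard = k}

/-- The degree of a vertex: the number of vertices adjacent to it. -/
noncomputable def gdeg {V : Type*} (G : SimpleGraph V) (v : V) : ℕ :=
  Nat.card {u : V // G.Adj v u}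

/-- The first Zagreb index: the sum of the squares of the vertex degrees. -/
noncomputable def zagreb1 {V : Type*} (G : SimpleGraph V) : ℕ :=
  ∑ᶠ v : V, (gdeg G v) ^ 2

/-- The second Zagreb index: the sum over edges `{u,v}` of `deg u * deg v`. -/
noncomputable def zagreb2 {V : Type*} (G : SimpleGraph V) : ℕ :=
  ∑ᶠ e ∈ G.edgeSet, Sym2.lift ⟨fun u v => gdeg G u * gdeg G v, fun u v => mul_comm _ _⟩ e

/-!
In a commutative semisimple ring, which `ℤ/nℤ` is for squarefree `n`, every ideal is generated
by an idempotent `e`, and its annihilator is generated by the complementary idempotent `1 - e`.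
So `I ↦ ann I` is an involution on ideals, `I ⊓ J = I * J`, and the only essential ideal is `⊤`
(a proper ideal `I` misses `ann I ≠ 0`). Hence `I + J` is essential iff
`ann I ⊓ ann J = ann (I + J) = 0` iff `ann I * ann J = 0`, and the annihilator maps the
essential ideal graph isomorphically onto the annihilating ideal graph.
-/

open Submodule

theorem IsIdempotentElem.annihilator_span_singleton {R : Type*} [CommRing R] {e : R}
    (he : IsIdempotentElem e) : (Ideal.span {e}).annihilator = Ideal.span {1 - e} := by
  ext x
  rw [← Ideal.submodule_span_eq, mem_annihilator_span_singleton, smul_eq_mul,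
    Ideal.mem_span_singleton]
  constructor
  · intro h
    exact ⟨x, by rw [sub_mul, one_mul, mul_comm e, h, sub_zero]⟩
  · rintro ⟨c, rfl⟩
    rw [mul_right_comm, sub_mul, one_mul, he.eq, sub_self, zero_mul]

theorem Ideal.annihilator_ne_bot_of_mul_eq_bot {R : Type*} [CommRing R] {I J : Ideal R}
    (hJ : J ≠ ⊥) (h : I * J = ⊥) : I.annihilator ≠ ⊥ :=
  ne_bot_of_le_ne_bot hJ <| le_annihilator_iff.mpr <| by rw [smul_eq_mul, mul_comm, h]

namespace IsSemisimpleRing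

variable {R : Type*} [CommRing R] [IsSemisimpleRing R]

theorem annihilator_annihilator (I : Ideal R) : I.annihilator.annihilator = I := by
  obtain ⟨e, he, rfl⟩ := ideal_eq_span_idempotent I
  rw [he.annihilator_span_singleton, he.one_sub.annihilator_span_singleton, sub_sub_cancel]

theorem annihilator_injective : Function.Injective (annihilator : Ideal R → Ideal R) :=
  Function.LeftInverse.injective annihilator_annihilator

theorem inf_eq_mul (I J : Ideal R) : I ⊓ J = I * J := by
  refine le_antisymm ?_ Ideal.mul_le_inf
  obtain ⟨e, he, hIJ⟩ := ideal_eq_span_idempotent (I ⊓ J)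
  have heIJ : e ∈ I ⊓ J := hIJ ▸ Ideal.mem_span_singleton_self e
  rw [hIJ, Ideal.span_singleton_le_iff_mem, ← he.eq]
  exact Ideal.mul_mem_mul heIJ.1 heIJ.2

theorem annihilator_eq_bot_iff {I : Ideal R} : I.annihilator = ⊥ ↔ I = ⊤ := by
  rw [← annihilator_eq_top_iff, annihilator_annihilator]

theorem isEssentialIdeal_iff_eq_top [Nontrivial R] {I : Ideal R} :
    IsEssentialIdeal I ↔ I = ⊤ := by
  refine ⟨fun ⟨_, hI⟩ => ?_, fun h => ⟨h ▸ top_ne_bot, fun J hJ => by rwa [h, top_inf_eq]⟩⟩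
  by_contra hne
  exact hI _ (mt annihilator_eq_bot_iff.mp hne) (by rw [inf_eq_mul, mul_annihilator])

theorem isEssentialIdeal_sup_iff [Nontrivial R] {I J : Ideal R} :
    IsEssentialIdeal (I ⊔ J) ↔ I.annihilator * J.annihilator = ⊥ := by
  rw [isEssentialIdeal_iff_eq_top, ← annihilator_eq_bot_iff, annihilator_sup, inf_eq_mul]

def essentialIdealGraphIsoAnnihilatingIdealGraph :
    essentialIdealGraph R ≃g annihilatingIdealGraph R where
  toFun I := ⟨I.1.annihilator, mt annihilator_eq_bot_iff.mp I.2.2, I.1, I.2.1, annihilator_mul I.1⟩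
  invFun J :=
    ⟨J.1.annihilator,
      let ⟨_, hJ', hJJ'⟩ := J.2.2; Ideal.annihilator_ne_bot_of_mul_eq_bot hJ' hJJ',
      mt annihilator_eq_top_iff.mp J.2.1⟩
  left_inv I := Subtype.ext (annihilator_annihilator I.1)
  right_inv J := Subtype.ext (annihilator_annihilator J.1)
  map_rel_iff' {I J} := by
    have := nontrivial_iff_ne_bot.mpr I.2.1
    have := Module.nontrivial R I.1
    exact (Subtype.ext_iff.trans (annihilator_injective.eq_iff.trans Subtype.ext_iff.symm)).not.and
      isEssentialIdeal_sup_iff.symm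

end IsSemisimpleRing

theorem Nat.squarefree_prod_of_injOn {ι : Type*} {s : Finset ι} {p : ι → ℕ}
    (hp : ∀ i ∈ s, (p i).Prime) (hinj : Set.InjOn p s) : Squarefree (∏ i ∈ s, p i) := by
  refine Finset.squarefree_prod_of_pairwise_isCoprime (fun i hi j hj hij => ?_)
    fun i hi => (hp i hi).prime.squarefree
  rw [Function.onFun, ← Nat.coprime_iff_isRelPrime]
  exact (Nat.coprime_primes (hp i hi) (hp j hj)).mpr (hinj.ne hi hj hij)

theorem stmt_2_general (k : ℕ) (p : Fin k → ℕ)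
    (hp : ∀ i, (p i).Prime) (hinj : Function.Injective p)
    (n : ℕ) (hn : n = ∏ i, p i) :
    Nonempty (essentialIdealGraph (ZMod n) ≃g annihilatingIdealGraph (ZMod n)) := by
  subst hn
  have : NeZero (∏ i, p i) := ⟨Finset.prod_ne_zero_iff.mpr fun i _ => (hp i).ne_zero⟩
  have : Fact (Squarefree (∏ i, p i)) := ⟨Nat.squarefree_prod_of_injOn (fun i _ => hp i) hinj.injOn⟩
  have := IsArtinianRing.isSemisimpleRing_of_isReduced (ZMod (∏ i, p i))
  exact ⟨IsSemisimpleRing.essentialIdealGraphIsoAnnihilatingIdealGraph⟩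

/-- For `n` a product of `k ≥ 2` distinct primes, the essential ideal graph
of `ℤ/nℤ` is isomorphic to the annihilating ideal graph of `ℤ/nℤ`. -/
theorem stmt_2 (k : ℕ) (hk : 2 ≤ k) (p : Fin k → ℕ)
    (hp : ∀ i, (p i).Prime) (hinj : Function.Injective p)
    (n : ℕ) (hn : n = ∏ i, p i) :
    Nonempty (essentialIdealGraph (ZMod n) ≃g annihilatingIdealGraph (ZMod n)) :=
  stmt_2_general k p hp hinj n hn
end

section
/- Let n = p_1 p_2 p_3 p_4 p_5 be a product of 5 distinct primes. Then the metric dimension of the essential ideal graph E_{Z_n} of Z_n = Z/nZ equals 5. -/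
/-!
Since `n` is squarefree, the Chinese remainder theorem makes `ZMod n` a product of five fields, so
its ideal lattice is the Boolean algebra `Fin 5 → Bool`. In a complemented ideal lattice only `⊤`
is essential, so `E_{Z_n}` becomes the graph on the elements `≠ ⊥, ⊤` of that Boolean algebra in
which `x ~ y` iff `x ⊔ y = ⊤`. There distinct `x, y` are at distance `1`, `3` or `2` according as
`x ⊔ y = ⊤`, `x ⊓ y = ⊥`, or neither. Hence `x` is at distance `1` from the coatom missing `i`
exactly when `x i` holds, and the five coatoms resolve the graph. That four vertices never do is a
finite check: already the nested pairs `x < y` with `x` of size at least two cannot all be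
separated by four vertices, which a branching search over the possible separators confirms.
-/

namespace SimpleGraph

variable {V V' : Type*} {G : SimpleGraph V} {G' : SimpleGraph V'}

theorem Hom.edist_le (f : G →g G') (u v : V) : G'.edist (f u) (f v) ≤ G.edist u v := by
  by_cases h : G.Reachable u v
  · obtain ⟨p, hp⟩ := h.exists_walk_length_eq_edist
    calc G'.edist (f u) (f v) ≤ (p.map f).length := G'.edist_le _
      _ = G.edist u v := by rw [Walk.length_map, hp]
  · rw [edist_eq_top_of_not_reachable h]
    exact le_top

theorem Iso.edist_apply (e : G ≃g G') (u v : V) : G'.edist (e u) (e v) = G.edist u v :=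
  le_antisymm (Hom.edist_le e.toHom u v) (by simpa using Hom.edist_le e.symm.toHom (e u) (e v))

theorem Iso.dist_apply (e : G ≃g G') (u v : V) : G'.dist (e u) (e v) = G.dist u v := by
  rw [dist, dist, e.edist_apply]

end SimpleGraph

section MetricDimension

variable {V V' : Type*} {G : SimpleGraph V} {G' : SimpleGraph V'}

theorem IsResolvingSet.image_iso (e : G ≃g G') {W : Set V} (h : IsResolvingSet G W) :
    IsResolvingSet G' (e '' W) := by
  intro u v huv
  obtain ⟨w, hw, hne⟩ := h (e.symm u) (e.symm v) (e.symm.injective.ne huv)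
  refine ⟨e w, Set.mem_image_of_mem e hw, ?_⟩
  rwa [← e.dist_apply, ← e.dist_apply, e.apply_symm_apply, e.apply_symm_apply] at hne

theorem metricDim_congr (e : G ≃g G') : metricDim G = metricDim G' := by
  unfold metricDim
  congr 1
  ext k
  constructor
  · rintro ⟨W, hfin, hres, rfl⟩
    exact ⟨e '' W, hfin.image e, hres.image_iso e, Set.ncard_image_of_injective W e.injective⟩
  · rintro ⟨W, hfin, hres, rfl⟩
    exact ⟨e.symm '' W, hfin.image e.symm, hres.image_iso e.symm,
      Set.ncard_image_of_injective W e.symm.injective⟩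

theorem metricDim_eq_of_isResolvingSet {k : ℕ} {W : Set V} (hW : W.Finite)
    (hres : IsResolvingSet G W) (hcard : W.ncard ≤ k)
    (hmin : ∀ W : Set V, W.Finite → IsResolvingSet G W → k ≤ W.ncard) : metricDim G = k := by
  have hmem : W.ncard ∈ {k | ∃ W : Set V, W.Finite ∧ IsResolvingSet G W ∧ W.ncard = k} :=
    ⟨W, hW, hres, rfl⟩
  refine le_antisymm ((Nat.sInf_le hmem).trans hcard) (le_csInf ⟨_, hmem⟩ ?_)
  rintro _ ⟨W', hW', hres', rfl⟩
  exact hmin W' hW' hres'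

end MetricDimension

def codisjointGraph (α : Type*) [Lattice α] [BoundedOrder α] :
    SimpleGraph {x : α // x ≠ ⊥ ∧ x ≠ ⊤} where
  Adj x y := x ≠ y ∧ Codisjoint x.1 y.1
  symm := ⟨fun _ _ h => And.intro h.1.symm h.2.symm⟩
  loopless := ⟨fun _ h => h.1 rfl⟩

section Lattice

variable {α β : Type*} [Lattice α] [BoundedOrder α] [Lattice β] [BoundedOrder β]

@[simp]
theorem codisjointGraph_adj {x y : {x : α // x ≠ ⊥ ∧ x ≠ ⊤}} :
    (codisjointGraph α).Adj x y ↔ Codisjoint x.1 y.1 :=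
  ⟨And.right, fun h => ⟨fun hxy => x.2.2 (codisjoint_self.1 (hxy ▸ h)), h⟩⟩

def OrderIso.codisjointGraphCongr (e : α ≃o β) : codisjointGraph α ≃g codisjointGraph β where
  toEquiv := e.toEquiv.subtypeEquiv fun x => by simp
  map_rel_iff' := by simp

end Lattice

section BooleanAlgebra

variable {α : Type*} [BooleanAlgebra α]

open SimpleGraph

def codisjointDist [DecidableEq α] (x y : α) : ℕ :=
  if x = y then 0 else if x ⊔ y = ⊤ then 1 else if x ⊓ y = ⊥ then 3 else 2

def complVertex (x : {x : α // x ≠ ⊥ ∧ x ≠ ⊤}) : {x : α // x ≠ ⊥ ∧ x ≠ ⊤} :=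
  ⟨x.1ᶜ, by simpa using x.2.2, by simpa using x.2.1⟩

theorem codisjointGraph_adj_complVertex (x : {x : α // x ≠ ⊥ ∧ x ≠ ⊤}) :
    (codisjointGraph α).Adj x (complVertex x) :=
  codisjointGraph_adj.2 isCompl_compl.codisjoint

theorem codisjointGraph_dist_eq_two {x y : {x : α // x ≠ ⊥ ∧ x ≠ ⊤}} (hxy : x ≠ y)
    (hsup : ¬Codisjoint x.1 y.1) (hinf : x.1 ⊓ y.1 ≠ ⊥) : (codisjointGraph α).dist x y = 2 := by
  let z : {x : α // x ≠ ⊥ ∧ x ≠ ⊤} :=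
    ⟨(x.1 ⊓ y.1)ᶜ, mt compl_eq_bot.1 fun h => x.2.2 (inf_eq_top_iff.1 h).1, mt compl_eq_top.1 hinf⟩
  have hxz : (codisjointGraph α).Adj x z :=
    codisjointGraph_adj.2 (isCompl_compl.codisjoint.mono_right (compl_le_compl inf_le_left))
  have hzy : (codisjointGraph α).Adj z y :=
    codisjointGraph_adj.2 (isCompl_compl.codisjoint.mono_right (compl_le_compl inf_le_right)).symm
  have hr : (codisjointGraph α).Reachable x y := ⟨.cons hxz (.cons hzy .nil)⟩
  have hle := (codisjointGraph α).dist_le (.cons hxz (.cons hzy .nil))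
  have hlt := hr.one_lt_dist_of_ne_of_not_adj hxy (mt codisjointGraph_adj.1 hsup)
  simp only [Walk.length_cons, Walk.length_nil] at hle
  omega

theorem codisjointGraph_dist_eq_three {x y : {x : α // x ≠ ⊥ ∧ x ≠ ⊤}}
    (hsup : ¬Codisjoint x.1 y.1) (hinf : x.1 ⊓ y.1 = ⊥) : (codisjointGraph α).dist x y = 3 := by
  have hxy : x ≠ y := by
    rintro rfl
    exact x.2.1 (by simpa using hinf)
  have hc : (codisjointGraph α).Adj (complVertex x) (complVertex y) :=
    codisjointGraph_adj.2 (codisjoint_iff.2 (by simp [complVertex, ← compl_inf, hinf]))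
  let p : (codisjointGraph α).Walk x y := .cons (codisjointGraph_adj_complVertex x)
    (.cons hc (.cons (codisjointGraph_adj_complVertex y).symm .nil))
  have hle := (codisjointGraph α).dist_le p
  have hlt : 2 < (codisjointGraph α).edist x y := by
    refine two_lt_edist_iff.2 ⟨hxy, mt codisjointGraph_adj.1 hsup, ?_⟩
    refine Set.eq_empty_of_forall_notMem fun z hz => z.2.2 ?_
    rw [mem_commonNeighbors, codisjointGraph_adj, codisjointGraph_adj] at hz
    have hcz := hz.1.inf_left hz.2
    rwa [hinf, bot_codisjoint] at hcz
  rw [← Reachable.coe_dist_eq_edist ⟨p⟩] at hlt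
  simp only [p, Walk.length_cons, Walk.length_nil] at hle
  norm_cast at hlt
  omega

theorem codisjointGraph_dist [DecidableEq α] (x y : {x : α // x ≠ ⊥ ∧ x ≠ ⊤}) :
    (codisjointGraph α).dist x y = codisjointDist x.1 y.1 := by
  unfold codisjointDist
  split_ifs with hxy hsup hinf
  · rw [Subtype.ext hxy, dist_self]
  · exact dist_eq_one_iff_adj.2 (codisjointGraph_adj.2 (codisjoint_iff.2 hsup))
  · exact codisjointGraph_dist_eq_three (mt codisjoint_iff.1 hsup) hinf
  · exact codisjointGraph_dist_eq_two (mt Subtype.ext_iff.1 hxy) (mt codisjoint_iff.1 hsup) hinf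

end BooleanAlgebra

section BoolFunctions

variable {ι : Type*} [DecidableEq ι]

def coatomVertex [Nontrivial ι] (i : ι) : {x : ι → Bool // x ≠ ⊥ ∧ x ≠ ⊤} :=
  ⟨fun j => j ≠ i,
    fun h => by obtain ⟨j, hj⟩ := exists_ne i; simpa [hj] using congrFun h j,
    fun h => by simpa using congrFun h i⟩

theorem coatomVertex_injective [Nontrivial ι] : Function.Injective (coatomVertex (ι := ι)) :=
  fun i j h => by simpa [coatomVertex] using congrFun (congrArg Subtype.val h) i

theorem codisjointDist_coatomVertex_eq_one_iff [Fintype ι] [Nontrivial ι] (x : ι → Bool) (i : ι) :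
    codisjointDist x (coatomVertex i).1 = 1 ↔ x i = true := by
  have hsup : x ⊔ (coatomVertex i).1 = ⊤ ↔ x i = true := by
    simp [coatomVertex, funext_iff, or_iff_not_imp_right]
  unfold codisjointDist
  split_ifs <;> simp_all [coatomVertex]

theorem isResolvingSet_range_coatomVertex [Fintype ι] [Nontrivial ι] :
    IsResolvingSet (codisjointGraph (ι → Bool)) (Set.range coatomVertex) := by
  intro u v huv
  obtain ⟨i, hi⟩ : ∃ i, u.1 i ≠ v.1 i := by
    by_contra! h
    exact huv (Subtype.ext (funext h))
  refine ⟨coatomVertex i, Set.mem_range_self i, fun h => hi ?_⟩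
  rw [codisjointGraph_dist, codisjointGraph_dist] at h
  rw [Bool.eq_iff_iff, ← codisjointDist_coatomVertex_eq_one_iff, h,
    codisjointDist_coatomVertex_eq_one_iff]

end BoolFunctions

section HittingBound

variable {α β : Type*} (R : α → β → Bool) (A : List α)

def hittingBound : ℕ → List β → Bool
  | 0, F => !F.isEmpty
  | _ + 1, [] => false
  | k + 1, b :: F => A.all fun a => !R a b || hittingBound k (F.filter fun b' => !R a b')

theorem lt_card_of_hittingBound [DecidableEq α] {k : ℕ} {F : List β}
    (h : hittingBound R A k F = true) {W : Finset α} (hWA : ∀ a ∈ W, a ∈ A)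
    (hW : ∀ b ∈ F, ∃ a ∈ W, R a b = true) : k < W.card := by
  induction k generalizing F W with
  | zero =>
    obtain ⟨b, hb⟩ := List.exists_mem_of_ne_nil F (by simpa [hittingBound] using h)
    obtain ⟨a, ha, -⟩ := hW b hb
    exact Finset.card_pos.2 ⟨a, ha⟩
  | succ k ih =>
    cases F with
    | nil => simp [hittingBound] at h
    | cons b F =>
      obtain ⟨a, ha, hab⟩ := hW b List.mem_cons_self
      have hrest : hittingBound R A k (F.filter fun b' => !R a b') = true := by
        simp only [hittingBound, List.all_eq_true, Bool.or_eq_true, Bool.not_eq_eq_eq_not,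
          Bool.not_true] at h
        simpa [hab] using h a (hWA a ha)
      have hlt := ih hrest (W := W.erase a) (fun c hc => hWA c (Finset.mem_of_mem_erase hc)) <| by
        intro b' hb'
        obtain ⟨hb'F, hab'⟩ := List.mem_filter.1 hb'
        obtain ⟨c, hc, hcb'⟩ := hW b' (List.mem_cons_of_mem b hb'F)
        refine ⟨c, Finset.mem_erase.2 ⟨?_, hc⟩, hcb'⟩
        rintro rfl
        simp [hcb'] at hab'
      rw [Finset.card_erase_of_mem ha] at hlt
      omega

end HittingBound

def boolVectorsFive : List (Fin 5 → Bool) :=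
  (List.range 32).map fun m i => m.testBit i

theorem mem_boolVectorsFive : ∀ x, x ∈ boolVectorsFive := by
  decide +kernel

def nestedPairsFive : List ((Fin 5 → Bool) × (Fin 5 → Bool)) :=
  (boolVectorsFive ×ˢ boolVectorsFive).filter fun p =>
    p.1 ⊔ p.2 = p.2 && p.1 ≠ p.2 && p.2 ≠ ⊤ && 2 ≤ (Finset.univ.filter fun i => p.1 i).card

theorem nestedPairsFive_spec :
    ∀ p ∈ nestedPairsFive, p.1 ≠ ⊥ ∧ p.1 ≠ ⊤ ∧ p.2 ≠ ⊥ ∧ p.2 ≠ ⊤ ∧ p.1 ≠ p.2 := by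
  decide +kernel

set_option maxRecDepth 100000 in
theorem hittingBound_nestedPairsFive :
    hittingBound (fun w p => codisjointDist p.1 w != codisjointDist p.2 w) boolVectorsFive 4
      nestedPairsFive = true := by
  decide +kernel

theorem five_le_ncard_of_isResolvingSet {W : Set {x : Fin 5 → Bool // x ≠ ⊥ ∧ x ≠ ⊤}}
    (hW : W.Finite) (hres : IsResolvingSet (codisjointGraph (Fin 5 → Bool)) W) :
    5 ≤ W.ncard := by
  classical
  have hsep : ∀ p ∈ nestedPairsFive, ∃ w ∈ hW.toFinset.image Subtype.val,
      (codisjointDist p.1 w != codisjointDist p.2 w) = true := by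
    intro p hp
    obtain ⟨h1b, h1t, h2b, h2t, hne⟩ := nestedPairsFive_spec p hp
    obtain ⟨w, hw, hd⟩ := hres ⟨p.1, h1b, h1t⟩ ⟨p.2, h2b, h2t⟩ (mt Subtype.ext_iff.1 hne)
    rw [codisjointGraph_dist, codisjointGraph_dist] at hd
    exact ⟨w.1, Finset.mem_image_of_mem _ (hW.mem_toFinset.2 hw), by simpa using hd⟩
  have hlt := lt_card_of_hittingBound _ _ hittingBound_nestedPairsFive
    (fun x _ => mem_boolVectorsFive x) hsep
  rw [Set.ncard_eq_toFinset_card W hW]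
  exact hlt.trans_le Finset.card_image_le

theorem metricDim_codisjointGraph_fin_five : metricDim (codisjointGraph (Fin 5 → Bool)) = 5 :=
  metricDim_eq_of_isResolvingSet (Set.finite_range _) isResolvingSet_range_coatomVertex
    (by rw [Set.ncard_range_of_injective coatomVertex_injective, Nat.card_eq_fintype_card,
      Fintype.card_fin])
    fun _ hW hres => five_le_ncard_of_isResolvingSet hW hres

def OrderIso.piCongrRight {ι : Type*} {α β : ι → Type*} [∀ i, Preorder (α i)]
    [∀ i, Preorder (β i)] (e : ∀ i, α i ≃o β i) : (∀ i, α i) ≃o ∀ i, β i where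
  toEquiv := Equiv.piCongrRight fun i => (e i).toEquiv
  map_rel_iff' := by simp [Pi.le_def]

theorem ZMod.nonempty_orderIso_ideal_prod_primes {ι : Type*} [Fintype ι] {p : ι → ℕ}
    (hp : ∀ i, (p i).Prime) (hinj : Function.Injective p) :
    Nonempty (Ideal (ZMod (∏ i, p i)) ≃o (ι → Bool)) := by
  classical
  have : ∀ i, Fact (p i).Prime := fun i => ⟨hp i⟩
  have coprime : Pairwise fun i j => Nat.Coprime (p i) (p j) := fun i j hij =>
    (Nat.coprime_primes (hp i) (hp j)).2 (hinj.ne hij)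
  exact ⟨(ZMod.prodEquivPi p coprime).symm.idealComapOrderIso.trans <|
    Ideal.piOrderIso.trans <| OrderIso.piCongrRight fun _ => IsSimpleOrder.orderIsoBool⟩

section EssentialIdeal

variable {R : Type*} [CommRing R] [Nontrivial R] [ComplementedLattice (Ideal R)]

theorem isEssentialIdeal_iff_eq_top {I : Ideal R} : IsEssentialIdeal I ↔ I = ⊤ := by
  refine ⟨fun ⟨_, hI⟩ => ?_, ?_⟩
  · obtain ⟨J, hJ⟩ := exists_isCompl I
    by_contra hne
    exact hI J (fun hJ0 => hne (eq_top_of_isCompl_bot (hJ0 ▸ hJ))) hJ.inf_eq_bot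
  · rintro rfl
    exact ⟨top_ne_bot, fun J hJ => by simpa using hJ⟩

theorem essentialIdealGraph_eq_codisjointGraph :
    essentialIdealGraph R = codisjointGraph (Ideal R) := by
  ext I J
  exact and_congr_right' (isEssentialIdeal_iff_eq_top.trans codisjoint_iff.symm)

end EssentialIdeal

/-- For `n` a product of `5` distinct primes, the metric dimension of the
essential ideal graph of `ℤ/nℤ` is `5`. -/
theorem stmt_5 (p : Fin 5 → ℕ)
    (hp : ∀ i, (p i).Prime) (hinj : Function.Injective p)
    (n : ℕ) (hn : n = ∏ i, p i) :
    metricDim (essentialIdealGraph (ZMod n)) = 5 := by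
  subst hn
  obtain ⟨e⟩ := ZMod.nonempty_orderIso_ideal_prod_primes hp hinj
  have : ComplementedLattice (Ideal (ZMod (∏ i, p i))) := e.symm.complementedLattice
  have : Nontrivial (ZMod (∏ i, p i)) := ZMod.nontrivial_iff.2 fun h =>
    (hp 0).ne_one (Nat.eq_one_of_dvd_one (h ▸ Finset.dvd_prod_of_mem p (Finset.mem_univ 0)))
  rw [essentialIdealGraph_eq_codisjointGraph, metricDim_congr e.codisjointGraphCongr,
    metricDim_codisjointGraph_fin_five]
end

section
/- Let n = p_1 p_2 ⋯ p_k be a product of k ≥ 6 distinct primes. Then the set W = {⟨n/p_1⟩, ⟨n/p_2⟩, …, ⟨n/p_k⟩} of all minimal nonzero ideals of Z_n = Z/nZ is a resolving set of the essential ideal graph E_{Z_n}; consequently the metric dimension of E_{Z_n} is at most k. -/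
theorem Nat.squarefree_prod_of_injective_prime {ι : Type*} [Fintype ι] {p : ι → ℕ}
    (hp : ∀ i, (p i).Prime) (hinj : Function.Injective p) : Squarefree (∏ i, p i) :=
  Finset.squarefree_prod_of_pairwise_isCoprime
    (fun i _ j _ hij =>
      Nat.coprime_iff_isRelPrime.1 ((Nat.coprime_primes (hp i) (hp j)).2 (hinj.ne hij)))
    (fun i _ => (hp i).prime.squarefree)

theorem Nat.coprime_div_of_squarefree {n d : ℕ} (hn : Squarefree n) (hd : d ∣ n) :
    d.Coprime (n / d) :=
  Nat.coprime_of_squarefree_mul ((Nat.mul_div_cancel' hd).symm ▸ hn)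

theorem Nat.Coprime.ne_of_left_ne_one {a b : ℕ} (hab : a.Coprime b) (ha : a ≠ 1) : a ≠ b :=
  fun h => ha ((Nat.coprime_self a).1 (h ▸ hab))

theorem isEssentialIdeal_top {R : Type*} [CommRing R] [Nontrivial R] :
    IsEssentialIdeal (⊤ : Ideal R) :=
  ⟨top_ne_bot, fun J hJ => by rwa [top_inf_eq]⟩

theorem SimpleGraph.dist_eq_dist_add_one_of_neighborSet_eq_singleton {V : Type*}
    {G : SimpleGraph V} {u m w : V} (hw : G.neighborSet w = {m}) (huw : u ≠ w)
    (hum : G.Reachable u m) : G.dist u w = G.dist u m + 1 := by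
  have hadj : ∀ x, G.Adj w x ↔ x = m := fun x => Set.ext_iff.1 hw x
  have hmw : G.Adj m w := ((hadj m).2 rfl).symm
  refine le_antisymm ?_ ?_
  · rw [← dist_eq_one_iff_adj.2 hmw]
    exact hmw.reachable.dist_triangle_right u
  · obtain ⟨p, hp⟩ := (hum.trans hmw.reachable).symm.exists_walk_length_eq_dist
    rw [G.dist_comm (u := u), G.dist_comm (u := u), ← hp]
    cases p with
    | nil => exact absurd rfl huw
    | cons h q =>
      obtain rfl := (hadj _).1 h
      simpa using dist_le q

open Ideal

namespace ZMod

variable {n : ℕ}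

theorem intCastRingHom_surjective (n : ℕ) : Function.Surjective (Int.castRingHom (ZMod n)) :=
  intCast_surjective

theorem map_intCast_span_natCast (d : ℕ) :
    (span {(d : ℤ)}).map (Int.castRingHom (ZMod n)) = span {(d : ZMod n)} := by
  simp [map_span]

theorem comap_intCast_span_natCast {d : ℕ} (hd : d ∣ n) :
    (span {(d : ZMod n)}).comap (Int.castRingHom (ZMod n)) = span {(d : ℤ)} := by
  rw [← map_intCast_span_natCast, comap_map_of_surjective _ (intCastRingHom_surjective n),
    ← RingHom.ker_eq_comap_bot, ker_intCastRingHom, sup_eq_left,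
    span_singleton_le_span_singleton]
  exact_mod_cast hd

theorem span_natCast_le_span_natCast_iff {d e : ℕ} (hd : d ∣ n) (he : e ∣ n) :
    span {(d : ZMod n)} ≤ span {(e : ZMod n)} ↔ e ∣ d := by
  rw [← comap_le_comap_iff_of_surjective _ (intCastRingHom_surjective n),
    comap_intCast_span_natCast hd, comap_intCast_span_natCast he,
    span_singleton_le_span_singleton, Int.natCast_dvd_natCast]

theorem span_natCast_inj {d e : ℕ} (hd : d ∣ n) (he : e ∣ n) :
    span {(d : ZMod n)} = span {(e : ZMod n)} ↔ d = e := by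
  refine ⟨fun h => Nat.dvd_antisymm ?_ ?_, fun h => h ▸ rfl⟩
  · exact (span_natCast_le_span_natCast_iff he hd).1 h.ge
  · exact (span_natCast_le_span_natCast_iff hd he).1 h.le

theorem span_natCast_eq_bot_iff {d : ℕ} (hd : d ∣ n) : span {(d : ZMod n)} = ⊥ ↔ d = n := by
  rw [← span_natCast_inj hd dvd_rfl, natCast_self, span_singleton_eq_bot.2 rfl]

theorem span_natCast_eq_top_iff {d : ℕ} (hd : d ∣ n) : span {(d : ZMod n)} = ⊤ ↔ d = 1 := by
  rw [← span_natCast_inj hd (one_dvd n), Nat.cast_one, span_singleton_one]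

theorem span_natCast_sup_span_natCast (d e : ℕ) :
    span {(d : ZMod n)} ⊔ span {(e : ZMod n)} = span {(d.gcd e : ZMod n)} := by
  rw [← map_intCast_span_natCast, ← map_intCast_span_natCast, ← map_intCast_span_natCast,
    ← Ideal.map_sup, ← span_insert, ← span_gcd, ← Int.coe_gcd, Int.gcd_natCast_natCast]

theorem exists_dvd_and_eq_span_natCast (I : Ideal (ZMod n)) :
    ∃ d, d ∣ n ∧ I = span {(d : ZMod n)} := by
  obtain ⟨g, hg⟩ := (IsPrincipalIdealRing.principal (I.comap (Int.castRingHom (ZMod n)))).principal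
  refine ⟨g.natAbs, ?_, ?_⟩
  · have : (n : ℤ) ∈ span {g} := by simp [← hg, mem_comap]
    rw [← Int.natCast_dvd_natCast, Int.natAbs_dvd]
    exact mem_span_singleton.1 this
  · rw [← map_intCast_span_natCast, Int.span_natAbs, ← submodule_span_eq, ← hg,
      map_comap_of_surjective _ (intCastRingHom_surjective n)]

theorem eq_top_of_isEssentialIdeal (hn : Squarefree n) {K : Ideal (ZMod n)}
    (hK : IsEssentialIdeal K) : K = ⊤ := by
  obtain ⟨d, hd, rfl⟩ := exists_dvd_and_eq_span_natCast K
  rw [span_natCast_eq_top_iff hd]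
  by_contra hd1
  have hcop := Nat.coprime_div_of_squarefree hn hd
  refine hK.2 (span {((n / d : ℕ) : ZMod n)}) ?_ ?_
  · rw [Ne, span_natCast_eq_bot_iff (Nat.div_dvd_of_dvd hd), Nat.div_eq_self]
    exact not_or.2 ⟨hn.ne_zero, hd1⟩
  · -- `⟨d⟩` and `⟨n/d⟩` are comaximal, so they meet in their product `⟨n⟩ = 0`.
    rw [← mul_eq_inf_of_isCoprime, span_singleton_mul_span_singleton, ← Nat.cast_mul,
      Nat.mul_div_cancel' hd, natCast_self, span_singleton_eq_bot.2 rfl]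
    rw [isCoprime_iff_sup_eq, span_natCast_sup_span_natCast, hcop, Nat.cast_one,
      span_singleton_one]

theorem isEssentialIdeal_iff_eq_top (hn : Squarefree n) (hn1 : n ≠ 1) {K : Ideal (ZMod n)} :
    IsEssentialIdeal K ↔ K = ⊤ :=
  have := nontrivial_iff.2 hn1
  ⟨eq_top_of_isEssentialIdeal hn, fun h => h ▸ isEssentialIdeal_top⟩

def spanNatCastVertex {d : ℕ} (hd : d ∣ n) (hd1 : d ≠ 1) (hdn : d ≠ n) :
    {I : Ideal (ZMod n) // I ≠ ⊥ ∧ I ≠ ⊤} :=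
  ⟨span {(d : ZMod n)}, (span_natCast_eq_bot_iff hd).not.2 hdn,
    (span_natCast_eq_top_iff hd).not.2 hd1⟩

section Graph

variable {u v w m : {I : Ideal (ZMod n) // I ≠ ⊥ ∧ I ≠ ⊤}} {d e q : ℕ}

theorem ne_one_of_vertex (hd : d ∣ n) (hu : u.1 = span {(d : ZMod n)}) : d ≠ 1 :=
  (span_natCast_eq_top_iff hd).not.1 (hu ▸ u.2.2)

theorem ne_self_of_vertex (hd : d ∣ n) (hu : u.1 = span {(d : ZMod n)}) : d ≠ n :=
  (span_natCast_eq_bot_iff hd).not.1 (hu ▸ u.2.1)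

theorem essentialIdealGraph_adj_iff (hn : Squarefree n) (hd : d ∣ n) (he : e ∣ n)
    (hu : u.1 = span {(d : ZMod n)}) (hv : v.1 = span {(e : ZMod n)}) :
    (essentialIdealGraph (ZMod n)).Adj u v ↔ d ≠ e ∧ d.Coprime e := by
  have hn1 : n ≠ 1 := fun h => ne_one_of_vertex hd hu (Nat.dvd_one.1 (h ▸ hd))
  change u ≠ v ∧ IsEssentialIdeal (u.1 ⊔ v.1) ↔ _
  rw [Ne, Subtype.ext_iff, hu, hv, span_natCast_inj hd he, span_natCast_sup_span_natCast,
    isEssentialIdeal_iff_eq_top hn hn1, span_natCast_eq_top_iff ((Nat.gcd_dvd_left d e).trans hd)]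

theorem not_prime_of_vertex (hd : d ∣ n) (hu : u.1 = span {(d : ZMod n)}) : ¬ n.Prime :=
  fun hn => (hn.eq_one_or_self_of_dvd d hd).elim (ne_one_of_vertex hd hu) (ne_self_of_vertex hd hu)

theorem essentialIdealGraph_adj_span_prime_iff (hn : Squarefree n) (hq : q.Prime) (hqn : q ∣ n)
    (hd : d ∣ n) (hu : u.1 = span {(d : ZMod n)}) (hm : m.1 = span {(q : ZMod n)}) :
    (essentialIdealGraph (ZMod n)).Adj u m ↔ ¬ q ∣ d := by
  rw [essentialIdealGraph_adj_iff hn hd hqn hu hm, Nat.coprime_comm, hq.coprime_iff_not_dvd]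
  exact and_iff_right_of_imp fun hqd hdq => hqd (hdq ▸ dvd_rfl)

theorem essentialIdealGraph_adj_span_div_iff (hn : Squarefree n) (hq : q.Prime) (hqn : q ∣ n)
    (hd : d ∣ n) (hu : u.1 = span {(d : ZMod n)})
    (hw : w.1 = span {((n / q : ℕ) : ZMod n)}) :
    (essentialIdealGraph (ZMod n)).Adj u w ↔ d = q := by
  have hcop := Nat.coprime_div_of_squarefree hn hqn
  rw [essentialIdealGraph_adj_iff hn hd (Nat.div_dvd_of_dvd hqn) hu hw]
  constructor
  · rintro ⟨-, hdq⟩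
    have : d ∣ q := hdq.dvd_of_dvd_mul_right (by rwa [Nat.mul_div_cancel' hqn])
    exact (hq.eq_one_or_self_of_dvd d this).resolve_left (ne_one_of_vertex hd hu)
  · rintro rfl
    exact ⟨hcop.ne_of_left_ne_one hq.one_lt.ne', hcop⟩

theorem neighborSet_span_div (hn : Squarefree n) (hq : q.Prime) (hqn : q ∣ n)
    (hw : w.1 = span {((n / q : ℕ) : ZMod n)}) (hm : m.1 = span {(q : ZMod n)}) :
    (essentialIdealGraph (ZMod n)).neighborSet w = {m} := by
  ext x
  obtain ⟨e, he, hx⟩ := exists_dvd_and_eq_span_natCast x.1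
  rw [SimpleGraph.mem_neighborSet, SimpleGraph.adj_comm,
    essentialIdealGraph_adj_span_div_iff hn hq hqn he hx hw, Set.mem_singleton_iff,
    Subtype.ext_iff, hx, hm, span_natCast_inj he hqn]

theorem dist_span_prime_eq_two (hn : Squarefree n) (hq : q.Prime) (hqd : q ∣ d) (hdq : d ≠ q)
    (hd : d ∣ n) (hu : u.1 = span {(d : ZMod n)}) (hm : m.1 = span {(q : ZMod n)}) :
    (essentialIdealGraph (ZMod n)).dist u m = 2 := by
  have hqn := hqd.trans hd
  have hcop := Nat.coprime_div_of_squarefree hn hd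
  have hd1 := ne_one_of_vertex hd hu
  have hdiv := Nat.div_dvd_of_dvd hd
  let v := spanNatCastVertex hdiv
    (fun h => ne_self_of_vertex hd hu (by rw [← Nat.mul_div_cancel' hd, h, mul_one]))
    (Nat.div_eq_self.not.2 (not_or.2 ⟨hn.ne_zero, hd1⟩))
  have huv : (essentialIdealGraph (ZMod n)).Adj u v :=
    (essentialIdealGraph_adj_iff hn hd hdiv hu rfl).2 ⟨hcop.ne_of_left_ne_one hd1, hcop⟩
  have hvm : (essentialIdealGraph (ZMod n)).Adj v m :=
    (essentialIdealGraph_adj_span_prime_iff hn hq hqn hdiv rfl hm).2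
      fun h => hq.one_lt.ne' ((hcop.coprime_dvd_left hqd).eq_one_of_dvd h)
  have hum : u ≠ m := by
    rwa [Ne, Subtype.ext_iff, hu, hm, span_natCast_inj hd hqn]
  have hnadj : ¬ (essentialIdealGraph (ZMod n)).Adj u m := by
    rwa [essentialIdealGraph_adj_span_prime_iff hn hq hqn hd hu hm, not_not]
  refine le_antisymm ?_ ((huv.reachable.trans hvm.reachable).one_lt_dist_of_ne_of_not_adj hum hnadj)
  simpa using SimpleGraph.dist_le (.cons huv (.cons hvm .nil))

theorem even_dist_span_div_iff (hn : Squarefree n) (hq : q.Prime) (hqn : q ∣ n) (hd : d ∣ n)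
    (hu : u.1 = span {(d : ZMod n)}) (hw : w.1 = span {((n / q : ℕ) : ZMod n)}) :
    Even ((essentialIdealGraph (ZMod n)).dist u w) ↔ ¬ q ∣ d := by
  have hqcop := Nat.coprime_div_of_squarefree hn hqn
  by_cases huw : u = w
  · obtain rfl : d = n / q :=
      (span_natCast_inj hd (Nat.div_dvd_of_dvd hqn)).1 (hu.symm.trans (huw ▸ hw))
    simpa [huw] using fun h => hq.one_lt.ne' (hqcop.eq_one_of_dvd h)
  obtain ⟨m, hm⟩ : ∃ m : {I : Ideal (ZMod n) // I ≠ ⊥ ∧ I ≠ ⊤}, m.1 = span {(q : ZMod n)} :=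
    ⟨spanNatCastVertex hqn hq.one_lt.ne' fun h => not_prime_of_vertex hd hu (h ▸ hq), rfl⟩
  obtain ⟨hum, hdist⟩ : (essentialIdealGraph (ZMod n)).Reachable u m ∧
      (Even ((essentialIdealGraph (ZMod n)).dist u m) ↔ q ∣ d) := by
    by_cases hqd : q ∣ d
    · by_cases hdq : d = q
      · obtain rfl : u = m := Subtype.ext (hu.trans (hdq ▸ hm.symm))
        simp [hqd]
      · have h2 := dist_span_prime_eq_two hn hq hqd hdq hd hu hm
        exact ⟨SimpleGraph.Reachable.of_dist_ne_zero (by omega), by simp [h2, hqd]⟩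
    · have hadj := (essentialIdealGraph_adj_span_prime_iff hn hq hqn hd hu hm).2 hqd
      exact ⟨hadj.reachable, by simp [SimpleGraph.dist_eq_one_iff_adj.2 hadj, hqd]⟩
  rw [SimpleGraph.dist_eq_dist_add_one_of_neighborSet_eq_singleton
    (neighborSet_span_div hn hq hqn hw hm) huw hum, Nat.even_add_one, hdist]

theorem isResolvingSet_of_span_div_mem (hn : Squarefree n)
    {W : Set {I : Ideal (ZMod n) // I ≠ ⊥ ∧ I ≠ ⊤}}
    (hW : ∀ w : {I : Ideal (ZMod n) // I ≠ ⊥ ∧ I ≠ ⊤}, ∀ q, q.Prime → q ∣ n →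
      w.1 = span {((n / q : ℕ) : ZMod n)} → w ∈ W) :
    IsResolvingSet (essentialIdealGraph (ZMod n)) W := by
  intro u v huv
  obtain ⟨d, hd, hu⟩ := exists_dvd_and_eq_span_natCast u.1
  obtain ⟨e, he, hv⟩ := exists_dvd_and_eq_span_natCast v.1
  have hde : d ≠ e := fun h => huv (Subtype.ext (by rw [hu, hv, h]))
  obtain ⟨q, hq, hqde⟩ : ∃ q, q.Prime ∧ ¬ (q ∣ d ↔ q ∣ e) := by
    simpa using
      (Nat.Squarefree.ext_iff (hn.squarefree_of_dvd hd) (hn.squarefree_of_dvd he)).not.1 hde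
  have hqn : q ∣ n := (by tauto : q ∣ d ∨ q ∣ e).elim (·.trans hd) (·.trans he)
  obtain ⟨w, hw⟩ : ∃ w : {I : Ideal (ZMod n) // I ≠ ⊥ ∧ I ≠ ⊤},
      w.1 = span {((n / q : ℕ) : ZMod n)} :=
    ⟨spanNatCastVertex (Nat.div_dvd_of_dvd hqn)
      (fun h => not_prime_of_vertex hd hu (by rwa [← Nat.mul_div_cancel' hqn, h, mul_one]))
      (Nat.div_eq_self.not.2 (not_or.2 ⟨hn.ne_zero, hq.one_lt.ne'⟩)), rfl⟩
  refine ⟨w, hW w q hq hqn hw, fun h => hqde ?_⟩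
  rw [← not_iff_not, ← even_dist_span_div_iff hn hq hqn hd hu hw,
    ← even_dist_span_div_iff hn hq hqn he hv hw, h]

end Graph

end ZMod

theorem Set.ncard_range_le_card {ι α : Type*} [Finite ι] (f : ι → α) :
    (Set.range f).ncard ≤ Nat.card ι := by
  rw [← Set.image_univ, ← Set.ncard_univ]
  exact Set.ncard_image_le Set.finite_univ

theorem metricDim_le_ncard {V : Type*} {G : SimpleGraph V} {W : Set V} (hW : W.Finite)
    (hres : IsResolvingSet G W) : metricDim G ≤ W.ncard :=
  Nat.sInf_le ⟨W, hW, hres, rfl⟩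

theorem stmt_6_general (k : ℕ) (p : Fin k → ℕ)
    (hp : ∀ i, (p i).Prime) (hinj : Function.Injective p)
    (n : ℕ) (hn : n = ∏ i, p i)
    (W : Set {I : Ideal (ZMod n) // I ≠ ⊥ ∧ I ≠ ⊤})
    (hW : W = {v | ∃ i : Fin k, v.1 = Ideal.span {((n / p i : ℕ) : ZMod n)}}) :
    IsResolvingSet (essentialIdealGraph (ZMod n)) W ∧
      metricDim (essentialIdealGraph (ZMod n)) ≤ k := by
  have hsq : Squarefree n := hn ▸ Nat.squarefree_prod_of_injective_prime hp hinj
  have hres : IsResolvingSet (essentialIdealGraph (ZMod n)) W := by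
    refine ZMod.isResolvingSet_of_span_div_mem hsq fun w q hq hqn hw => hW ▸ ?_
    obtain ⟨i, -, hqi⟩ := (hq.prime.dvd_finsetProd_iff p).1 (hn ▸ hqn)
    exact ⟨i, (Nat.prime_dvd_prime_iff_eq hq (hp i)).1 hqi ▸ hw⟩
  have hsub : Subtype.val '' W ⊆ Set.range fun i => span {((n / p i : ℕ) : ZMod n)} := by
    rintro _ ⟨v, hv, rfl⟩
    obtain ⟨i, hi⟩ := hW ▸ hv
    exact ⟨i, hi.symm⟩
  have hfin := Set.finite_range fun i => span {((n / p i : ℕ) : ZMod n)}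
  refine ⟨hres, ?_⟩
  calc metricDim (essentialIdealGraph (ZMod n))
      ≤ W.ncard :=
        metricDim_le_ncard ((hfin.subset hsub).of_finite_image Subtype.val_injective.injOn) hres
    _ = (Subtype.val '' W).ncard := (Set.ncard_image_of_injective W Subtype.val_injective).symm
    _ ≤ (Set.range fun i => span {((n / p i : ℕ) : ZMod n)}).ncard := Set.ncard_le_ncard hsub hfin
    _ ≤ k := (Set.ncard_range_le_card _).trans_eq (Nat.card_fin k)

/-- For `n` a product of `k ≥ 6` distinct primes, the set of all minimal
nonzero ideals `⟨n/pᵢ⟩` of `ℤ/nℤ` is a resolving set of the essential ideal graph, so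
the metric dimension is at most `k`. -/
theorem stmt_6 (k : ℕ) (hk : 6 ≤ k) (p : Fin k → ℕ)
    (hp : ∀ i, (p i).Prime) (hinj : Function.Injective p)
    (n : ℕ) (hn : n = ∏ i, p i)
    (W : Set {I : Ideal (ZMod n) // I ≠ ⊥ ∧ I ≠ ⊤})
    (hW : W = {v | ∃ i : Fin k, v.1 = Ideal.span {((n / p i : ℕ) : ZMod n)}}) :
    IsResolvingSet (essentialIdealGraph (ZMod n)) W ∧
      metricDim (essentialIdealGraph (ZMod n)) ≤ k :=
  stmt_6_general k p hp hinj n hn W hW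
end

section
/- Let n = p_1^{m_1} p_2^{m_2} where p_1 < p_2 are primes and m_i > 1 for at least one i, and set m = m_1 m_2 − 1 and T = (m_1 + 1)(m_2 + 1) − 2 (the number of nonzero proper ideals of Z_n = Z/nZ). Then the first Zagreb index of the essential ideal graph E_{Z_n} equals m(T − 1)^2 + m_1(m + m_2)^2 + m_2(m + m_1)^2. -/
/-! By the Chinese remainder theorem the ideal lattice of `ℤ/n` is the product of the ideal
lattices of `ℤ/p₁^m₁` and `ℤ/p₂^m₂`, which are chains with `m₁ + 1` and `m₂ + 1` elements.
In a product of two nontrivial chains an element is essential iff both of its coordinates are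
nonzero, so `I + J` fails to be essential exactly when `I` and `J` vanish in the same coordinate.
Hence `E_{ℤ_n}` is the complete graph on `T` vertices with the edges of two disjoint cliques
removed: the `m₂` ideals with zero first coordinate and the `m₁` ideals with zero second
coordinate. Their vertices have degrees `T - m₂ = m + m₁` and `T - m₁ = m + m₂`, and the
remaining `m` vertices have degree `T - 1`. -/

section IsEssential

variable {α β : Type*} [Lattice α] [OrderBot α] [Lattice β] [OrderBot β]

def IsEssential (a : α) : Prop :=
  a ≠ ⊥ ∧ ∀ b, b ≠ ⊥ → a ⊓ b ≠ ⊥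

theorem isEssentialIdeal_iff_isEssential {R : Type*} [CommRing R] {I : Ideal R} :
    IsEssentialIdeal I ↔ IsEssential I :=
  Iff.rfl

theorem OrderIso.isEssential_iff (e : α ≃o β) {a : α} : IsEssential (e a) ↔ IsEssential a := by
  simp only [IsEssential, e.surjective.forall, ← map_inf, ne_eq, map_eq_bot_iff]

theorem isEssential_iff_ne_bot (h : ∀ a b : α, a ≤ b ∨ b ≤ a) {a : α} :
    IsEssential a ↔ a ≠ ⊥ := by
  refine ⟨And.left, fun ha => ⟨ha, fun b hb => ?_⟩⟩
  rcases h a b with hab | hba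
  · rwa [inf_eq_left.mpr hab]
  · rwa [inf_eq_right.mpr hba]

theorem isEssential_iff_forall_inf_ne_bot [Nontrivial α] {a : α} :
    IsEssential a ↔ ∀ b, b ≠ ⊥ → a ⊓ b ≠ ⊥ := by
  refine ⟨And.right, fun h => ⟨fun ha => ?_, h⟩⟩
  obtain ⟨b, hb⟩ := exists_ne (⊥ : α)
  exact h b hb (by rw [ha, bot_inf_eq])

theorem Prod.isEssential_iff [Nontrivial α] [Nontrivial β] {x : α × β} :
    IsEssential x ↔ IsEssential x.1 ∧ IsEssential x.2 := by
  constructor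
  · rintro ⟨-, hx⟩
    simp only [isEssential_iff_forall_inf_ne_bot]
    refine ⟨fun a ha h => hx (a, ⊥) ?_ ?_, fun b hb h => hx (⊥, b) ?_ ?_⟩
    all_goals simp_all [Prod.ext_iff]
  · rintro ⟨⟨hx₁, h₁⟩, -, h₂⟩
    refine ⟨fun h => hx₁ (congrArg Prod.fst h), fun y hy h => ?_⟩
    by_cases hy₁ : y.1 = ⊥
    · exact h₂ y.2 (fun h' => hy (Prod.ext hy₁ h')) (congrArg Prod.snd h)
    · exact h₁ y.1 hy₁ (congrArg Prod.fst h)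

end IsEssential

theorem Nat.card_subtype_not {α : Type*} [Finite α] (p : α → Prop) :
    Nat.card {a // ¬p a} = Nat.card α - Nat.card {a // p a} := by
  classical
  have := Fintype.ofFinite α
  simp only [Nat.card_eq_fintype_card, Fintype.card_subtype_compl]

section Counting

variable {α : Type*} [PartialOrder α] [BoundedOrder α] [Finite α]

theorem Nat.card_subtype_ne_bot : Nat.card {a : α // a ≠ ⊥} = Nat.card α - 1 := by
  rw [Nat.card_subtype_not, ← Set.ncard_singleton (⊥ : α), ← Nat.card_coe_set_eq]
  rfl

theorem Nat.card_subtype_ne_bot_ne_top [Nontrivial α] :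
    Nat.card {a : α // a ≠ ⊥ ∧ a ≠ ⊤} = Nat.card α - 2 := by
  have : Nat.card {a : α // a = ⊥ ∨ a = ⊤} = 2 := by
    rw [← Set.ncard_pair (bot_ne_top (α := α)), ← Nat.card_coe_set_eq]
    rfl
  simp only [← not_or, Nat.card_subtype_not, this]

end Counting

section TwoCliques

open Finset

variable {V : Type*} [Finite V] {G : SimpleGraph V}

theorem gdeg_eq_of_adj_iff {v : V} (S : V → Prop) (h : ∀ u, G.Adj v u ↔ ¬S u) :
    gdeg G v = Nat.card V - Nat.card {u // S u} := by
  rw [gdeg, ← Nat.card_subtype_not]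
  exact Nat.card_congr (Equiv.subtypeEquivRight h)

theorem zagreb1_eq_of_adj_iff (P Q : V → Prop) (hPQ : ∀ v, P v → ¬Q v)
    (hadj : ∀ u v, G.Adj u v ↔ u ≠ v ∧ ¬(P u ∧ P v) ∧ ¬(Q u ∧ Q v)) :
    zagreb1 G = Nat.card {v // P v} * (Nat.card V - Nat.card {v // P v}) ^ 2 +
      Nat.card {v // Q v} * (Nat.card V - Nat.card {v // Q v}) ^ 2 +
      (Nat.card V - Nat.card {v // P v} - Nat.card {v // Q v}) * (Nat.card V - 1) ^ 2 := by
  classical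
  have := Fintype.ofFinite V
  have deg_P (v : V) (hv : P v) : gdeg G v = Nat.card V - Nat.card {v // P v} :=
    gdeg_eq_of_adj_iff P fun u => by
      have := hPQ v hv
      rw [hadj]
      exact ⟨fun h hu => h.2.1 ⟨hv, hu⟩, fun hu => ⟨by rintro rfl; exact hu hv, by tauto, by tauto⟩⟩
  have deg_Q (v : V) (hv : Q v) : gdeg G v = Nat.card V - Nat.card {v // Q v} :=
    gdeg_eq_of_adj_iff Q fun u => by
      have := fun hp => hPQ v hp hv
      rw [hadj]
      exact ⟨fun h hu => h.2.2 ⟨hv, hu⟩, fun hu => ⟨by rintro rfl; exact hu hv, by tauto, by tauto⟩⟩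
  have deg_other (v : V) (hv : ¬P v ∧ ¬Q v) : gdeg G v = Nat.card V - 1 := by
    rw [gdeg_eq_of_adj_iff (· = v) fun u => by rw [hadj]; tauto, ← Set.ncard_singleton v]
    rfl
  have split (f : V → ℕ) : ∑ v, f v = ∑ v ∈ univ.filter P, f v + ∑ v ∈ univ.filter Q, f v +
      ∑ v ∈ univ.filter (fun v => ¬P v ∧ ¬Q v), f v := by
    rw [← sum_filter_add_sum_filter_not univ P,
      ← sum_filter_add_sum_filter_not (univ.filter (¬P ·)) Q, filter_filter, filter_filter,
      add_assoc]
    congr 3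
    ext v
    simp only [mem_filter, mem_univ, true_and]
    exact ⟨And.right, fun hv => ⟨fun hp => hPQ v hp hv, hv⟩⟩
  have card_filter (S : V → Prop) [DecidablePred S] : #(univ.filter S) = Nat.card {v // S v} := by
    rw [Nat.card_eq_fintype_card, Fintype.card_subtype]
  have card_other : Nat.card {v // ¬P v ∧ ¬Q v} =
      Nat.card V - Nat.card {v // P v} - Nat.card {v // Q v} := by
    have hN := split 1
    simp only [Pi.one_apply, sum_const, smul_eq_mul, mul_one, card_univ, card_filter,
      ← Nat.card_eq_fintype_card] at hN
    omega
  rw [zagreb1, finsum_eq_sum_of_fintype, split,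
    sum_const_nat fun v hv => by rw [deg_P v (mem_filter.mp hv).2],
    sum_const_nat fun v hv => by rw [deg_Q v (mem_filter.mp hv).2],
    sum_const_nat fun v hv => by rw [deg_other v (mem_filter.mp hv).2],
    card_filter, card_filter, card_filter, card_other]

end TwoCliques

section IdealLatticeProduct

variable {R L₁ L₂ : Type*} [CommRing R] [Lattice L₁] [BoundedOrder L₁] [Lattice L₂]
  [BoundedOrder L₂]

theorem essentialIdealGraph_adj_iff_of_orderIso [Nontrivial L₁] [Nontrivial L₂]
    (φ : Ideal R ≃o L₁ × L₂) (h₁ : ∀ a b : L₁, a ≤ b ∨ b ≤ a)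
    (h₂ : ∀ a b : L₂, a ≤ b ∨ b ≤ a) {I J : {I : Ideal R // I ≠ ⊥ ∧ I ≠ ⊤}} :
    (essentialIdealGraph R).Adj I J ↔
      I ≠ J ∧ ¬((φ I).1 = ⊥ ∧ (φ J).1 = ⊥) ∧ ¬((φ I).2 = ⊥ ∧ (φ J).2 = ⊥) := by
  change I ≠ J ∧ IsEssentialIdeal (I.1 ⊔ J.1) ↔ _
  rw [isEssentialIdeal_iff_isEssential, ← φ.isEssential_iff, Prod.isEssential_iff,
    isEssential_iff_ne_bot h₁, isEssential_iff_ne_bot h₂, map_sup, Prod.fst_sup, Prod.snd_sup]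
  simp only [ne_eq, sup_eq_bot_iff]

theorem card_ideal_ne_bot_ne_top_of_orderIso [Nontrivial L₁] [Finite L₁] [Finite L₂]
    (φ : Ideal R ≃o L₁ × L₂) :
    Nat.card {I : Ideal R // I ≠ ⊥ ∧ I ≠ ⊤} = Nat.card L₁ * Nat.card L₂ - 2 := by
  rw [← Nat.card_prod, ← Nat.card_subtype_ne_bot_ne_top]
  exact Nat.card_congr (Equiv.subtypeEquiv φ.toEquiv fun I => by simp)

theorem card_fst_eq_bot_of_orderIso [Nontrivial L₁] [Finite L₂] (φ : Ideal R ≃o L₁ × L₂) :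
    Nat.card {I : {I : Ideal R // I ≠ ⊥ ∧ I ≠ ⊤} // (φ I).1 = ⊥} = Nat.card L₂ - 1 := by
  rw [← Nat.card_subtype_ne_bot]
  refine Nat.card_congr
    { toFun I := ⟨(φ I).2, fun h => I.1.2.1 ((map_eq_bot_iff φ).mp (Prod.ext I.2 h))⟩
      invFun b := ⟨⟨φ.symm (⊥, b), ?_, ?_⟩, by simp⟩
      left_inv I := by ext : 2; simp [φ.symm_apply_eq, Prod.ext_iff, I.2]
      right_inv b := by simp }
  · simpa [Prod.ext_iff] using b.2
  · simp [Prod.ext_iff]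

theorem zagreb1_essentialIdealGraph_of_orderIso [Nontrivial L₁] [Nontrivial L₂] [Finite L₁]
    [Finite L₂] (φ : Ideal R ≃o L₁ × L₂) (h₁ : ∀ a b : L₁, a ≤ b ∨ b ≤ a)
    (h₂ : ∀ a b : L₂, a ≤ b ∨ b ≤ a) :
    zagreb1 (essentialIdealGraph R) =
      (Nat.card L₂ - 1) * (Nat.card L₁ * Nat.card L₂ - 2 - (Nat.card L₂ - 1)) ^ 2 +
      (Nat.card L₁ - 1) * (Nat.card L₁ * Nat.card L₂ - 2 - (Nat.card L₁ - 1)) ^ 2 +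
      (Nat.card L₁ * Nat.card L₂ - 2 - (Nat.card L₂ - 1) - (Nat.card L₁ - 1)) *
        (Nat.card L₁ * Nat.card L₂ - 2 - 1) ^ 2 := by
  have : Finite (Ideal R) := Finite.of_equiv _ φ.symm.toEquiv
  have card_snd : Nat.card {I : {I : Ideal R // I ≠ ⊥ ∧ I ≠ ⊤} // (φ I).2 = ⊥} =
      Nat.card L₁ - 1 :=
    card_fst_eq_bot_of_orderIso (φ.trans OrderIso.prodComm)
  have disjoint (I : {I : Ideal R // I ≠ ⊥ ∧ I ≠ ⊤}) (h : (φ I).1 = ⊥) : (φ I).2 ≠ ⊥ :=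
    fun h' => I.2.1 ((map_eq_bot_iff φ).mp (Prod.ext h h'))
  rw [zagreb1_eq_of_adj_iff _ _ disjoint fun I J => essentialIdealGraph_adj_iff_of_orderIso φ h₁ h₂,
    card_ideal_ne_bot_ne_top_of_orderIso φ, card_fst_eq_bot_of_orderIso φ, card_snd]

end IdealLatticeProduct

namespace ZMod

variable {p : ℕ}

theorem map_intCast_span_pow (n i : ℕ) :
    (Ideal.span {(p : ℤ) ^ i}).map (Int.castRingHom (ZMod n)) =
      Ideal.span {(p : ZMod n) ^ i} := by
  rw [Ideal.map_span, Set.image_singleton, map_pow, map_natCast]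

theorem comap_intCast_span_pow {m i : ℕ} (hi : i ≤ m) :
    (Ideal.span {(p : ZMod (p ^ m)) ^ i}).comap (Int.castRingHom _) =
      Ideal.span {(p : ℤ) ^ i} := by
  rw [← map_intCast_span_pow, Ideal.comap_map_of_surjective _ intCast_surjective,
    ← RingHom.ker_eq_comap_bot, ker_intCastRingHom, sup_eq_left,
    Ideal.span_singleton_le_span_singleton, Nat.cast_pow]
  exact pow_dvd_pow _ hi

variable {m : ℕ}

theorem span_pow_le_span_pow_iff (hp : p.Prime) {i j : ℕ} (hi : i ≤ m) (hj : j ≤ m) :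
    Ideal.span {(p : ZMod (p ^ m)) ^ i} ≤ Ideal.span {(p : ZMod (p ^ m)) ^ j} ↔ j ≤ i := by
  have hp' := Nat.prime_iff_prime_int.mp hp
  rw [← Ideal.comap_le_comap_iff_of_surjective (Int.castRingHom (ZMod (p ^ m))) intCast_surjective,
    comap_intCast_span_pow hi, comap_intCast_span_pow hj, Ideal.span_singleton_le_span_singleton,
    pow_dvd_pow_iff hp'.ne_zero hp'.not_isUnit]

theorem exists_ideal_eq_span_pow (hp : p.Prime) (I : Ideal (ZMod (p ^ m))) :
    ∃ i ≤ m, I = Ideal.span {(p : ZMod (p ^ m)) ^ i} := by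
  obtain ⟨a, ha⟩ := (IsPrincipalIdealRing.principal (I.comap (Int.castRingHom _))).principal
  rw [Ideal.submodule_span_eq] at ha
  have hdvd : a ∣ (p : ℤ) ^ m := by
    rw [← Ideal.mem_span_singleton, ← ha, Ideal.mem_comap, map_pow, map_natCast, ← Nat.cast_pow,
      natCast_self]
    exact I.zero_mem
  obtain ⟨i, hi, hassoc⟩ := (dvd_prime_pow (Nat.prime_iff_prime_int.mp hp) m).mp hdvd
  refine ⟨i, hi, ?_⟩
  rw [← Ideal.map_comap_of_surjective (Int.castRingHom (ZMod (p ^ m))) intCast_surjective I,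
    ha, Ideal.span_singleton_eq_span_singleton.mpr hassoc, map_intCast_span_pow]

theorem ideal_le_total (hp : p.Prime) (I J : Ideal (ZMod (p ^ m))) : I ≤ J ∨ J ≤ I := by
  obtain ⟨i, -, rfl⟩ := exists_ideal_eq_span_pow hp I
  obtain ⟨j, -, rfl⟩ := exists_ideal_eq_span_pow hp J
  simp only [Ideal.span_singleton_le_span_singleton]
  exact (le_total j i).imp (pow_dvd_pow _) (pow_dvd_pow _)

theorem card_ideal_primePow (hp : p.Prime) : Nat.card (Ideal (ZMod (p ^ m))) = m + 1 := by
  let f (i : Fin (m + 1)) : Ideal (ZMod (p ^ m)) := Ideal.span {(p : ZMod (p ^ m)) ^ (i : ℕ)}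
  have hf : Function.Bijective f := by
    refine ⟨fun i j h => Fin.ext (le_antisymm ?_ ?_), fun I => ?_⟩
    · exact (span_pow_le_span_pow_iff hp j.is_le i.is_le).mp h.ge
    · exact (span_pow_le_span_pow_iff hp i.is_le j.is_le).mp h.le
    · obtain ⟨i, hi, rfl⟩ := exists_ideal_eq_span_pow hp I
      exact ⟨⟨i, Nat.lt_succ_of_le hi⟩, rfl⟩
  rw [← Nat.card_eq_of_bijective f hf, Nat.card_fin]

end ZMod

theorem stmt_19_general (p₁ p₂ : ℕ) (hp₁ : p₁.Prime) (hp₂ : p₂.Prime) (hlt : p₁ < p₂)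
    (m₁ m₂ : ℕ) (hm₁ : 1 ≤ m₁) (hm₂ : 1 ≤ m₂)
    (n : ℕ) (hn : n = p₁ ^ m₁ * p₂ ^ m₂)
    (m T : ℕ) (hm : m = m₁ * m₂ - 1) (hT : T = (m₁ + 1) * (m₂ + 1) - 2) :
    zagreb1 (essentialIdealGraph (ZMod n)) =
      m * (T - 1) ^ 2 + m₁ * (m + m₂) ^ 2 + m₂ * (m + m₁) ^ 2 := by
  subst hn
  have : Fact (1 < p₁ ^ m₁) := ⟨Nat.one_lt_pow (by omega) hp₁.one_lt⟩
  have : Fact (1 < p₂ ^ m₂) := ⟨Nat.one_lt_pow (by omega) hp₂.one_lt⟩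
  let φ := (ZMod.chineseRemainder (Nat.Coprime.pow m₁ m₂
    ((Nat.coprime_primes hp₁ hp₂).mpr hlt.ne))).idealComapOrderIso.symm.trans Ideal.idealProdEquiv
  rw [zagreb1_essentialIdealGraph_of_orderIso φ (ZMod.ideal_le_total hp₁) (ZMod.ideal_le_total hp₂),
    ZMod.card_ideal_primePow hp₁, ZMod.card_ideal_primePow hp₂]
  have hT' : T = m + m₁ + m₂ := by
    subst hm hT
    have : 0 < m₁ * m₂ := Nat.mul_pos hm₁ hm₂
    rw [show (m₁ + 1) * (m₂ + 1) = m₁ * m₂ + m₁ + m₂ + 1 by ring]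
    omega
  rw [← hT, hT']
  simp only [Nat.add_sub_cancel]
  rw [show m + m₁ + m₂ - m₁ = m + m₂ by omega]
  ring

/-- For `n = p₁^{m₁} p₂^{m₂}` with `p₁ < p₂` primes and some `mᵢ > 1`,
setting `m = m₁m₂ - 1` and `T = (m₁+1)(m₂+1) - 2`, the first Zagreb index of the
essential ideal graph of `ℤ/nℤ` equals `m(T-1)² + m₁(m+m₂)² + m₂(m+m₁)²`. -/
theorem stmt_19 (p₁ p₂ : ℕ) (hp₁ : p₁.Prime) (hp₂ : p₂.Prime) (hlt : p₁ < p₂)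
    (m₁ m₂ : ℕ) (hm₁ : 1 ≤ m₁) (hm₂ : 1 ≤ m₂) (hsome : 1 < m₁ ∨ 1 < m₂)
    (n : ℕ) (hn : n = p₁ ^ m₁ * p₂ ^ m₂)
    (m T : ℕ) (hm : m = m₁ * m₂ - 1) (hT : T = (m₁ + 1) * (m₂ + 1) - 2) :
    zagreb1 (essentialIdealGraph (ZMod n)) =
      m * (T - 1) ^ 2 + m₁ * (m + m₂) ^ 2 + m₂ * (m + m₁) ^ 2 :=
  stmt_19_general p₁ p₂ hp₁ hp₂ hlt m₁ m₂ hm₁ hm₂ n hn m T hm hT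
end
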